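/- Let ε ∈ (0,1/10) and α ∈ ℝ. Then the Lebesgue measure of the set {ξ ∈ ℝ : |ξ² - α| < 2ε} is at most C√ε if |α| < 10ε, and at most C ε/√|α| if |α| ≥ 10ε, for a universal constant C. -/

import Mathlib

/-!
The set `{ξ : |ξ² - α| < δ}` consists of the `ξ` with `α - δ < |ξ|² < α + δ`. It always lies in the
interval `|ξ| < √(α + δ)`, which is empty when `α + δ ≤ 0` and has length `O(√ε)` when `δ = 2ε` and
`|α| < 10ε`. When `δ ≤ α` it lies in the two intervals `√(α - δ) < |ξ| < √(α + δ)`, whose length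
`√(α + δ) - √(α - δ) = 2δ / (√(α + δ) + √(α - δ))` is at most `2δ / √α`.
-/

open MeasureTheory Real Set

section ParabolaNeighborhood

variable {α δ ξ : ℝ}

lemma abs_lt_sqrt_of_abs_sq_sub_lt (h : |ξ ^ 2 - α| < δ) : |ξ| < √(α + δ) :=
  lt_sqrt_of_sq_lt <| by rw [sq_abs]; linarith [(abs_lt.1 h).2]

lemma sqrt_lt_abs_of_abs_sq_sub_lt (hδα : δ ≤ α) (h : |ξ ^ 2 - α| < δ) : √(α - δ) < |ξ| := by
  rw [← sqrt_sq_eq_abs]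
  exact sqrt_lt_sqrt (by linarith) (by linarith [(abs_lt.1 h).1])

lemma setOf_abs_sq_sub_lt_subset_Ioo :
    {ξ : ℝ | |ξ ^ 2 - α| < δ} ⊆ Ioo (-√(α + δ)) √(α + δ) :=
  fun _ h ↦ abs_lt.1 (abs_lt_sqrt_of_abs_sq_sub_lt h)

lemma setOf_abs_sq_sub_lt_subset_union_Ioo (hδα : δ ≤ α) :
    {ξ : ℝ | |ξ ^ 2 - α| < δ} ⊆
      Ioo (-√(α + δ)) (-√(α - δ)) ∪ Ioo √(α - δ) √(α + δ) := by
  intro ξ h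
  have hupper := abs_lt_sqrt_of_abs_sq_sub_lt h
  have hlower := sqrt_lt_abs_of_abs_sq_sub_lt hδα h
  rcases le_or_gt 0 ξ with hξ | hξ
  · rw [abs_of_nonneg hξ] at hupper hlower
    exact Or.inr ⟨hlower, hupper⟩
  · rw [abs_of_neg hξ] at hupper hlower
    exact Or.inl ⟨by linarith, by linarith⟩

lemma volume_setOf_abs_sq_sub_lt_le :
    volume {ξ : ℝ | |ξ ^ 2 - α| < δ} ≤ ENNReal.ofReal (2 * √(α + δ)) := by
  refine (measure_mono setOf_abs_sq_sub_lt_subset_Ioo).trans_eq ?_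
  rw [Real.volume_Ioo]
  ring_nf

lemma volume_setOf_abs_sq_sub_lt_le_of_le (hδ : 0 ≤ δ) (hδα : δ ≤ α) :
    volume {ξ : ℝ | |ξ ^ 2 - α| < δ} ≤ ENNReal.ofReal (2 * (√(α + δ) - √(α - δ))) := by
  have hmono : √(α - δ) ≤ √(α + δ) := sqrt_le_sqrt (by linarith)
  calc volume {ξ : ℝ | |ξ ^ 2 - α| < δ}
      ≤ volume (Ioo (-√(α + δ)) (-√(α - δ)) ∪ Ioo √(α - δ) √(α + δ)) :=
        measure_mono (setOf_abs_sq_sub_lt_subset_union_Ioo hδα)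
    _ ≤ volume (Ioo (-√(α + δ)) (-√(α - δ))) + volume (Ioo √(α - δ) √(α + δ)) :=
        measure_union_le _ _
    _ = ENNReal.ofReal (2 * (√(α + δ) - √(α - δ))) := by
        rw [Real.volume_Ioo, Real.volume_Ioo,
          ← ENNReal.ofReal_add (by linarith) (by linarith)]
        ring_nf

lemma sqrt_add_sub_sqrt_sub_le (hα : 0 < α) (hδ : 0 ≤ δ) (hδα : δ ≤ α) :
    √(α + δ) - √(α - δ) ≤ 2 * δ / √α := by
  have hplus := sq_sqrt (by linarith : 0 ≤ α + δ)
  have hminus := sq_sqrt (by linarith : 0 ≤ α - δ)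
  have hsqrt_le : √α ≤ √(α + δ) := sqrt_le_sqrt (by linarith)
  have hdiff_nonneg : 0 ≤ √(α + δ) - √(α - δ) := by
    linarith [sqrt_le_sqrt (by linarith : α - δ ≤ α + δ)]
  rw [le_div_iff₀ (sqrt_pos.2 hα)]
  calc (√(α + δ) - √(α - δ)) * √α
      ≤ (√(α + δ) - √(α - δ)) * (√(α + δ) + √(α - δ)) :=
        mul_le_mul_of_nonneg_left (by linarith [sqrt_nonneg (α - δ)]) hdiff_nonneg
    _ = 2 * δ := by nlinarith

end ParabolaNeighborhood

open MeasureTheory Real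

/-- Slice-measure estimate for an `ε`-neighborhood of the parabola: for `ε ∈ (0,1/10)` and
`α ∈ ℝ`, the measure of `{ξ : |ξ² - α| < 2ε}` is at most `C√ε` if `|α| < 10ε` and at most
`Cε/√|α|` if `|α| ≥ 10ε`. -/
theorem stmt6 :
    ∃ C : ℝ, 0 < C ∧ ∀ ε α : ℝ, 0 < ε → ε < 1/10 →
      ((|α| < 10 * ε →
          volume {ξ : ℝ | |ξ ^ 2 - α| < 2 * ε} ≤ ENNReal.ofReal (C * Real.sqrt ε)) ∧
       (10 * ε ≤ |α| →
          volume {ξ : ℝ | |ξ ^ 2 - α| < 2 * ε} ≤ ENNReal.ofReal (C * ε / Real.sqrt |α|))) := by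
  refine ⟨8, by norm_num, fun ε α hε _ ↦ ⟨fun hα ↦ ?_, fun hα ↦ ?_⟩⟩
  · refine volume_setOf_abs_sq_sub_lt_le.trans (ENNReal.ofReal_le_ofReal ?_)
    have : √(α + 2 * ε) ≤ 4 * √ε := sqrt_le_iff.2
      ⟨by positivity, by rw [mul_pow, sq_sqrt hε.le]; linarith [(abs_lt.1 hα).2]⟩
    linarith
  rcases le_or_gt α 0 with hα0 | hα0
  · refine volume_setOf_abs_sq_sub_lt_le.trans (ENNReal.ofReal_le_ofReal ?_)
    rw [sqrt_eq_zero'.2 (by linarith [abs_of_nonpos hα0]), mul_zero]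
    positivity
  · rw [abs_of_pos hα0] at hα ⊢
    refine (volume_setOf_abs_sq_sub_lt_le_of_le (by linarith) (by linarith)).trans (ENNReal.ofReal_le_ofReal ?_)
    have := sqrt_add_sub_sqrt_sub_le hα0 (by linarith : 0 ≤ 2 * ε) (by linarith)
    calc 2 * (√(α + 2 * ε) - √(α - 2 * ε)) ≤ 2 * (2 * (2 * ε) / √α) := by linarith
      _ = 8 * ε / √α := by ring
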